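/- arXiv:1708.09262 — 9 statements merged into one kernel-verified Lean document; each statement's English description precedes it below -/
import Mathlib

section
/- Let k be a field, p a prime number different from char k, and u ∈ k^× an element not of the form ζ·a^p for any root of unity ζ ∈ k of p-power order and a ∈ k^×. Then the polynomial X^p − u is irreducible over k. -/
theorem stmt0_general {k : Type*} [Field k] (p : ℕ) (hp : p.Prime)
    (u : k)
    (h : ¬ ∃ ζ a : k, (∃ m : ℕ, ζ ^ p ^ m = 1) ∧ u = ζ * a ^ p) :
    Irreducible (Polynomial.X ^ p - Polynomial.C u) :=
  X_pow_sub_C_irreducible_of_prime hp fun a ha ↦ h ⟨1, a, ⟨0, one_pow _⟩, by rw [one_mul, ha]⟩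

theorem stmt0 {k : Type*} [Field k] (p : ℕ) (hp : p.Prime) (hchar : (p : k) ≠ 0)
    (u : k) (hu : u ≠ 0)
    (h : ¬ ∃ ζ a : k, (∃ m : ℕ, ζ ^ p ^ m = 1) ∧ u = ζ * a ^ p) :
    Irreducible (Polynomial.X ^ p - Polynomial.C u) :=
  stmt0_general p hp u h
end

section
/- Let k be a field, p a prime different from char k, and u ∈ k^× with u ∉ μ(k)_p·(k^×)^p. Let k₁ = k(t) where t is a root of X^p − u. Then the group of p-power roots of unity in k₁ equals that of k, i.e. μ(k₁)_p = μ(k)_p. -/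
/-!
Suppose `ζ ∈ K \ k` is a root of unity of `p`-power order. Since `u` is not a `p`-th power,
`X ^ p - u` is irreducible and `[K : k] = p` is prime, so `K = k(ζ)` is a cyclotomic, hence
Galois, extension with cyclic Galois group, and any `σ ≠ 1` has fixed field `k`. Both
`σ ζ / ζ ≠ 1` and `σ t / t` are `p`-power roots of unity, the latter of order dividing `p`, so
`σ t / t = (σ ζ / ζ) ^ b` for some `b`. Then `t / ζ ^ b` is fixed by `σ`, i.e. `t = y ζ ^ b` with
`y ∈ k`, and `u = (ζ ^ b) ^ p y ^ p` with `(ζ ^ b) ^ p = u / y ^ p ∈ μ(k)_p`, contradicting the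
hypothesis on `u`.
-/

open Polynomial IntermediateField

theorem exists_pow_eq_of_pow_eq_one {R : Type*} [CommRing R] [IsDomain R] {p : ℕ} (hp : p.Prime)
    {δ ω : R} {m : ℕ} (hδ : δ ^ p ^ m = 1) (hδ1 : δ ≠ 1) (hω : ω ^ p = 1) : ∃ b : ℕ, δ ^ b = ω := by
  obtain ⟨r, -, hr⟩ := (Nat.dvd_prime_pow hp).mp (orderOf_dvd_of_pow_eq_one hδ)
  have hr0 : r ≠ 0 := by
    rintro rfl
    exact hδ1 (orderOf_eq_one_iff.mp (by rw [hr, pow_zero]))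
  have : NeZero (orderOf δ) := ⟨by rw [hr]; exact pow_ne_zero r hp.ne_zero⟩
  have hωδ : ω ^ orderOf δ = 1 := by
    rw [hr, ← Nat.succ_pred_eq_of_ne_zero hr0, pow_succ', pow_mul, hω, one_pow]
  obtain ⟨b, -, hb⟩ := (IsPrimitiveRoot.orderOf δ).eq_pow_of_pow_eq_one hωδ
  exact ⟨b, hb⟩

section

variable {k K : Type*} [Field k] [Field K] [Algebra k K]

theorem finrank_eq_natDegree_of_adjoin_eq_top {f : k[X]} (hirr : Irreducible f) (hmonic : f.Monic)
    {t : K} (ht : aeval t f = 0) (hK : k⟮t⟯ = ⊤) : Module.finrank k K = f.natDegree := by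
  rw [← finrank_top', ← hK, adjoin.finrank ⟨f, hmonic, ht⟩,
    minpoly.eq_of_irreducible_of_monic hirr ht hmonic]

theorem adjoin_simple_eq_top_of_finrank_prime (hp : (Module.finrank k K).Prime) {x : K}
    (hx : x ∉ Set.range (algebraMap k K)) : k⟮x⟯ = ⊤ :=
  have := isSimpleOrder_of_finrank_prime k K hp
  (eq_bot_or_eq_top k⟮x⟯).resolve_left fun h => hx (adjoin_simple_eq_bot_iff.mp h)

theorem isGalois_of_adjoin_simple_eq_top [Algebra.IsIntegral k K] {ζ : K} (hζ : IsOfFinOrder ζ)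
    (hK : k⟮ζ⟯ = ⊤) : IsGalois k K := by
  have : NeZero (orderOf ζ) := ⟨hζ.orderOf_pos.ne'⟩
  have := (IsPrimitiveRoot.orderOf ζ).intermediateField_adjoin_isCyclotomicExtension k
  have := IsCyclotomicExtension.isGalois {orderOf ζ} k k⟮ζ⟯
  exact IsGalois.of_algEquiv ((equivOfEq hK).trans topEquiv)

theorem mem_range_algebraMap_of_apply_eq_self [FiniteDimensional k K] [IsGalois k K]
    (hp : (Module.finrank k K).Prime) {σ : Gal(K/k)} (hσ : σ ≠ 1) {x : K} (hx : σ x = x) :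
    x ∈ Set.range (algebraMap k K) := by
  have : Fact (Module.finrank k K).Prime := ⟨hp⟩
  have hstab : ⊤ ≤ MulAction.stabilizer Gal(K/k) x := by
    rw [← zpowers_eq_top_of_prime_card (IsGalois.card_aut_eq_finrank k K) hσ,
      Subgroup.zpowers_le]
    exact hx
  exact (IsGalois.mem_range_algebraMap_iff_fixed x).mpr fun f => hstab (Subgroup.mem_top f)

theorem exists_eq_algebraMap_mul_pow {p : ℕ} (hp : p.Prime) {σ : K ≃ₐ[k] K}
    (hfix : ∀ x, σ x = x → x ∈ Set.range (algebraMap k K)) {ζ : K} {m : ℕ} (hζ : ζ ^ p ^ m = 1)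
    (hσζ : σ ζ ≠ ζ) {t : K} (ht : t ^ p ∈ Set.range (algebraMap k K)) :
    ∃ (y : k) (b : ℕ), t = algebraMap k K y * ζ ^ b := by
  rcases eq_or_ne t 0 with rfl | ht0
  · exact ⟨0, 0, by simp⟩
  have hζ0 : ζ ≠ 0 := by
    rintro rfl
    simp [hp.ne_zero] at hζ
  obtain ⟨c, hc⟩ := ht
  have hδ : (σ ζ / ζ) ^ p ^ m = 1 := by rw [div_pow, ← map_pow, hζ, map_one, div_one]
  have hδ1 : σ ζ / ζ ≠ 1 := fun h => hσζ ((div_eq_one_iff_eq hζ0).mp h)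
  have hω : (σ t / t) ^ p = 1 := by
    rw [div_pow, ← map_pow, ← hc, AlgEquiv.commutes, hc, div_self (pow_ne_zero p ht0)]
  obtain ⟨b, hb⟩ := exists_pow_eq_of_pow_eq_one hp hδ hδ1 hω
  have hσt : σ t = (σ ζ / ζ) ^ b * t := by rw [hb, div_mul_cancel₀ _ ht0]
  obtain ⟨y, hy⟩ := hfix (t / ζ ^ b) (by
    have : σ ζ ≠ 0 := (map_ne_zero σ).mpr hζ0
    rw [map_div₀, map_pow, hσt, div_pow]
    field_simp)
  exact ⟨y, b, by rw [hy, div_mul_cancel₀ _ (pow_ne_zero b hζ0)]⟩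

theorem exists_pow_eq_one_and_eq_mul_pow {p m b : ℕ} {u y : k} (hu : u ≠ 0) {t ζ : K}
    (ht : t ^ p = algebraMap k K u) (hζ : ζ ^ p ^ m = 1) (hty : t = algebraMap k K y * ζ ^ b) :
    ∃ z : k, z ^ p ^ m = 1 ∧ u = z * y ^ p := by
  have hu' : algebraMap k K u = algebraMap k K (y ^ p) * (ζ ^ b) ^ p := by
    rw [← ht, hty, mul_pow, map_pow]
  have hy : y ^ p ≠ 0 := by
    rintro hy
    rw [hy, map_zero, zero_mul, map_eq_zero] at hu'
    exact hu hu'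
  refine ⟨u / y ^ p, (algebraMap k K).injective ?_, (div_mul_cancel₀ u hy).symm⟩
  rw [map_pow, map_div₀, hu', mul_div_cancel_left₀ _ ((_root_.map_ne_zero _).mpr hy), map_one,
    show ((ζ ^ b) ^ p) ^ p ^ m = (ζ ^ p ^ m) ^ (b * p) by ring, hζ, one_pow]

end

theorem stmt1_general {k K : Type*} [Field k] [Field K] [Algebra k K] (p : ℕ) (hp : p.Prime)
    (u : k) (hu : u ≠ 0)
    (h : ¬ ∃ ζ a : k, (∃ m : ℕ, ζ ^ p ^ m = 1) ∧ u = ζ * a ^ p)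
    (t : K) (ht : t ^ p = algebraMap k K u)
    (hK : IntermediateField.adjoin k {t} = ⊤) :
    ∀ ζ : K, (∃ m : ℕ, ζ ^ p ^ m = 1) ↔
      ∃ ζ₀ : k, (∃ m : ℕ, ζ₀ ^ p ^ m = 1) ∧ ζ = algebraMap k K ζ₀ := by
  have hirr : Irreducible (X ^ p - C u) :=
    X_pow_sub_C_irreducible_of_prime hp fun a ha => h ⟨1, a, ⟨0, by simp⟩, by rw [ha, one_mul]⟩
  have hrank : Module.finrank k K = p := by
    rw [finrank_eq_natDegree_of_adjoin_eq_top hirr (monic_X_pow_sub_C u hp.ne_zero) (by simp [ht])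
      hK, natDegree_X_pow_sub_C]
  have : FiniteDimensional k K := Module.finite_of_finrank_pos (hrank ▸ hp.pos)
  intro ζ
  refine ⟨fun ⟨m, hm⟩ => ?_, fun ⟨ζ₀, ⟨m, hm⟩, hζ⟩ => ⟨m, by rw [hζ, ← map_pow, hm, map_one]⟩⟩
  obtain ⟨ζ₀, rfl⟩ : ζ ∈ Set.range (algebraMap k K) := by
    by_contra hζk
    have : IsGalois k K := isGalois_of_adjoin_simple_eq_top
      (isOfFinOrder_iff_pow_eq_one.mpr ⟨p ^ m, pow_pos hp.pos m, hm⟩)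
      (adjoin_simple_eq_top_of_finrank_prime (hrank ▸ hp) hζk)
    obtain ⟨σ, hσζ⟩ : ∃ σ : Gal(K/k), σ ζ ≠ ζ :=
      not_forall.mp (mt (IsGalois.mem_range_algebraMap_iff_fixed ζ).mpr hζk)
    have hσ : σ ≠ 1 := by rintro rfl; exact hσζ rfl
    obtain ⟨y, b, hy⟩ := exists_eq_algebraMap_mul_pow hp
      (fun x => mem_range_algebraMap_of_apply_eq_self (hrank ▸ hp) hσ) hm hσζ ⟨u, ht.symm⟩
    obtain ⟨z, hz, rfl⟩ := exists_pow_eq_one_and_eq_mul_pow hu ht hm hy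
    exact h ⟨z, y, ⟨m, hz⟩, rfl⟩
  exact ⟨ζ₀, ⟨m, (algebraMap k K).injective (by rw [map_pow, hm, map_one])⟩, rfl⟩

theorem stmt1 {k K : Type*} [Field k] [Field K] [Algebra k K] (p : ℕ) (hp : p.Prime)
    (hchar : (p : k) ≠ 0) (u : k) (hu : u ≠ 0)
    (h : ¬ ∃ ζ a : k, (∃ m : ℕ, ζ ^ p ^ m = 1) ∧ u = ζ * a ^ p)
    (t : K) (ht : t ^ p = algebraMap k K u)
    (hK : IntermediateField.adjoin k {t} = ⊤) :
    ∀ ζ : K, (∃ m : ℕ, ζ ^ p ^ m = 1) ↔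
      ∃ ζ₀ : k, (∃ m : ℕ, ζ₀ ^ p ^ m = 1) ∧ ζ = algebraMap k K ζ₀ :=
  stmt1_general p hp u hu h t ht hK
end

section
/- Let k be a field, p a prime different from char k, and u ∈ k^× with u ∉ μ(k)_p·(k^×)^p. Let t be a root of X^p − u in an algebraic closure and k₁ = k(t). Then t ∉ μ(k₁)_p·(k₁^×)^p. -/
/-!
Taking norms from `k(t)` to `k`: the minimal polynomial of `t` is `X ^ p - u`, so
`N(t) = ±u`, with sign `(-1) ^ (p + 1)`, which is itself a `p`-power root of unity. The norm is
multiplicative, so it carries `μ(k(t))_p · (k(t)^×)^p` into `μ(k)_p · (k^×)^p`.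
-/

open Polynomial IntermediateField

/-- `μ(M)_p · M^p`. -/
def rootsOfUnityMulPowers (p : ℕ) (M : Type*) [CommMonoid M] : Submonoid M where
  carrier := {x | ∃ ζ a : M, (∃ m : ℕ, ζ ^ p ^ m = 1) ∧ x = ζ * a ^ p}
  one_mem' := ⟨1, 1, ⟨0, one_pow _⟩, by simp⟩
  mul_mem' := by
    rintro _ _ ⟨ζ, a, ⟨m, hζ⟩, rfl⟩ ⟨ξ, b, ⟨n, hξ⟩, rfl⟩
    refine ⟨ζ * ξ, a * b, ⟨m + n, ?_⟩, ?_⟩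
    · rw [mul_pow, pow_add, pow_mul, hζ, one_pow, one_mul, mul_comm (p ^ m), pow_mul, hξ,
        one_pow]
    · rw [mul_pow]; ac_rfl

namespace rootsOfUnityMulPowers

variable {p : ℕ} {M N : Type*} [CommMonoid M] [CommMonoid N]

theorem mem_iff {x : M} :
    x ∈ rootsOfUnityMulPowers p M ↔ ∃ ζ a : M, (∃ m : ℕ, ζ ^ p ^ m = 1) ∧ x = ζ * a ^ p :=
  Iff.rfl

theorem map_mem (f : M →* N) {x : M} (hx : x ∈ rootsOfUnityMulPowers p M) :
    f x ∈ rootsOfUnityMulPowers p N := by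
  obtain ⟨ζ, a, ⟨m, hζ⟩, rfl⟩ := hx
  exact ⟨f ζ, f a, ⟨m, by rw [← map_pow, hζ, map_one]⟩, by rw [map_mul, map_pow]⟩

theorem neg_one_pow_succ_mem (R : Type*) [CommRing R] :
    (-1 : R) ^ (p + 1) ∈ rootsOfUnityMulPowers p R :=
  ⟨(-1) ^ (p + 1), 1,
    ⟨1, by rw [← pow_mul, pow_one, mul_comm, (Nat.even_mul_succ_self p).neg_one_pow]⟩,
    by rw [one_pow, mul_one]⟩

end rootsOfUnityMulPowers

theorem Algebra.norm_eq_of_pow_eq_of_adjoin_eq_top {k K : Type*} [Field k] [Field K] [Algebra k K]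
    {n : ℕ} {a : k} (hirr : Irreducible (X ^ n - C a)) {t : K} (ht : t ^ n = algebraMap k K a)
    (hK : k⟮t⟯ = ⊤) :
    Algebra.norm k t = (-1) ^ (n + 1) * a := by
  have hn : n ≠ 0 := by
    rintro rfl
    rw [pow_zero, ← C.map_one, ← map_sub] at hirr
    exact not_irreducible_C _ hirr
  have hmonic : (X ^ n - C a).Monic := monic_X_pow_sub_C a hn
  have hroot : aeval t (X ^ n - C a) = 0 := by simp [ht]
  have hint : IsIntegral k t := ⟨_, hmonic, by rwa [← aeval_def]⟩
  have hmin : minpoly k t = X ^ n - C a :=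
    (minpoly.eq_of_irreducible_of_monic hirr hroot hmonic).symm
  have hadj : Algebra.adjoin k {t} = ⊤ := by
    rw [← adjoin_simple_toSubalgebra_of_isAlgebraic hint.isAlgebraic, hK, top_toSubalgebra]
  let pb := PowerBasis.ofAdjoinEqTop hint hadj
  have hnorm := Algebra.PowerBasis.norm_gen_eq_coeff_zero_minpoly pb
  rw [PowerBasis.ofAdjoinEqTop_gen, PowerBasis.ofAdjoinEqTop_dim, hmin,
    natDegree_X_pow_sub_C] at hnorm
  rw [hnorm, coeff_sub, coeff_X_pow, if_neg (Ne.symm hn), coeff_C_zero, pow_succ]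
  ring

theorem stmt2_general {k K : Type*} [Field k] [Field K] [Algebra k K] (p : ℕ) (hp : p.Prime)
    (u : k)
    (h : ¬ ∃ ζ a : k, (∃ m : ℕ, ζ ^ p ^ m = 1) ∧ u = ζ * a ^ p)
    (t : K) (ht : t ^ p = algebraMap k K u)
    (hK : IntermediateField.adjoin k {t} = ⊤) :
    ¬ ∃ ζ a : K, (∃ m : ℕ, ζ ^ p ^ m = 1) ∧ t = ζ * a ^ p := by
  rw [← rootsOfUnityMulPowers.mem_iff] at h ⊢
  intro ht_mem
  have hirr : Irreducible (X ^ p - C u) :=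
    X_pow_sub_C_irreducible_of_prime hp fun b hb ↦ h ⟨1, b, ⟨0, one_pow _⟩, by rw [hb, one_mul]⟩
  have hu : u = (-1) ^ (p + 1) * Algebra.norm k t := by
    rw [Algebra.norm_eq_of_pow_eq_of_adjoin_eq_top hirr ht hK, ← mul_assoc, ← pow_add,
      Even.neg_one_pow ⟨_, rfl⟩, one_mul]
  exact h (hu ▸ mul_mem (rootsOfUnityMulPowers.neg_one_pow_succ_mem k)
    (rootsOfUnityMulPowers.map_mem (Algebra.norm k) ht_mem))

theorem stmt2 {k K : Type*} [Field k] [Field K] [Algebra k K] (p : ℕ) (hp : p.Prime)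
    (hchar : (p : k) ≠ 0) (u : k) (hu : u ≠ 0)
    (h : ¬ ∃ ζ a : k, (∃ m : ℕ, ζ ^ p ^ m = 1) ∧ u = ζ * a ^ p)
    (t : K) (ht : t ^ p = algebraMap k K u)
    (hK : IntermediateField.adjoin k {t} = ⊤) :
    ¬ ∃ ζ a : K, (∃ m : ℕ, ζ ^ p ^ m = 1) ∧ t = ζ * a ^ p :=
  stmt2_general p hp u h t ht hK
end

section
/- Let k be a field, p a prime different from char k, and u ∈ k^× with u ∉ μ(k)_p·(k^×)^p. For an integer d ≥ 1 let t be a root of X^{p^d} − u and k_d = k(t). Then [k_d : k] = p^d and μ(k_d)_p = μ(k)_p. -/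
/-!
For `d = 1`: `X ^ p - u` is irreducible, so `[k(t) : k] = p`, and a `p`-th root of unity in
`k(t)` has degree `< p` over `k`, hence lies in `k`. If some `ζ` of `p`-power order were not
in `k`, take one with `ζ ^ p = c ∈ k`; then `k(t) = k(ζ)` carries the automorphism `σ : ζ ↦ ω ζ`
for a primitive `p`-th root of unity `ω ∈ k`. As `(σ t) ^ p = t ^ p`, `σ t = ω ^ j t`, so
`t ζ ^ (p - j)` is fixed by `σ`, hence lies in `k`, and `u c ^ (p - j)` is a `p`-th power in `k`;
as `c` has `p`-power order, this contradicts the choice of `u`.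

For general `d`, induct along `k ⊆ k(t ^ p) ⊆ k(t)`. The hypothesis on `u` passes to
`t ^ p` over `k(t ^ p)`: taking norms, `t ^ p ∈ μ(k(t ^ p))_p · k(t ^ p) ^ p` would force
`u ^ (p ^ d) ∈ μ(k)_p · k ^ (p ^ (d + 1))`, i.e. `u ∈ μ(k)_p · k ^ p`.
-/

open Polynomial IntermediateField

/-- `x ∈ μ(k)_p · kⁿ`, where `μ(k)_p` is the group of roots of unity of `p`-power order. -/
def IsRootOfUnityMulPow {k : Type*} [Field k] (p n : ℕ) (x : k) : Prop :=
  ∃ ζ a : k, (∃ m : ℕ, ζ ^ p ^ m = 1) ∧ x = ζ * a ^ n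

namespace IsRootOfUnityMulPow

variable {k K : Type*} [Field k] [Field K] [Algebra k K] {p n : ℕ}

theorem of_pow_eq {x b : k} (h : b ^ n = x) : IsRootOfUnityMulPow p n x :=
  ⟨1, b, ⟨0, one_pow _⟩, by rw [one_mul, h]⟩

theorem pow {x : K} (h : IsRootOfUnityMulPow p n x) (e : ℕ) :
    IsRootOfUnityMulPow p (e * n) (x ^ e) := by
  obtain ⟨ζ, a, ⟨m, hζ⟩, rfl⟩ := h
  refine ⟨ζ ^ e, a, ⟨m, by rw [← pow_mul, mul_comm, pow_mul, hζ, one_pow]⟩, ?_⟩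
  rw [mul_pow, ← pow_mul, mul_comm n e]

theorem norm {x : K} (h : IsRootOfUnityMulPow p n x) :
    IsRootOfUnityMulPow p n (Algebra.norm k x) := by
  obtain ⟨ζ, a, ⟨m, hζ⟩, rfl⟩ := h
  exact ⟨Algebra.norm k ζ, Algebra.norm k a, ⟨m, by rw [← map_pow, hζ, map_one]⟩, by
    rw [map_mul, map_pow]⟩

theorem of_pow_prime_pow (hp : p ≠ 0) {x : k} {d : ℕ}
    (h : IsRootOfUnityMulPow p (p ^ d * n) (x ^ p ^ d)) : IsRootOfUnityMulPow p n x := by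
  obtain ⟨ω, b, ⟨m, hω⟩, hx⟩ := h
  rw [pow_mul'] at hx
  by_cases hb : b ^ n = 0
  · rw [hb, zero_pow (pow_ne_zero d hp), mul_zero] at hx
    exact ⟨1, b, ⟨0, one_pow _⟩, by rw [eq_zero_of_pow_eq_zero hx, hb, mul_zero]⟩
  · have hroot : (x / b ^ n) ^ p ^ d = ω := by
      rw [div_pow, hx, mul_div_cancel_right₀ _ (pow_ne_zero _ hb)]
    exact ⟨x / b ^ n, b, ⟨d + m, by rw [pow_add, pow_mul, hroot, hω]⟩,
      (div_mul_cancel₀ x hb).symm⟩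

theorem of_mul_eq_pow (hp : p ≠ 0) {x c b : k} {m : ℕ} (hc : c ^ p ^ m = 1)
    (h : x * c = b ^ n) : IsRootOfUnityMulPow p n x := by
  have hc0 : c ≠ 0 := ne_zero_pow (pow_ne_zero m hp) (hc ▸ one_ne_zero)
  exact ⟨c⁻¹, b, ⟨m, by rw [inv_pow, hc, inv_one]⟩,
    by rw [← h, mul_comm x, inv_mul_cancel_left₀ hc0]⟩

end IsRootOfUnityMulPow

theorem IsPrimitiveRoot.of_pow_prime_eq_one {R : Type*} [CommRing R] [IsDomain R] {p : ℕ}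
    (hp : p.Prime) {η : R} (hη : η ^ p = 1) (hη1 : η ≠ 1) : IsPrimitiveRoot η p :=
  isPrimitiveRoot_of_mem_nthRootsFinset hp ((Polynomial.mem_nthRootsFinset hp.pos 1).mpr hη) hη1

section

variable {k K : Type*} [Field k] [Field K] [Algebra k K]

theorem IntermediateField.adjoin_simple_gen_eq_top (x : K) : k⟮AdjoinSimple.gen k x⟯ = ⊤ := by
  apply map_injective k⟮x⟯.val
  rw [adjoin_map, ← AlgHom.fieldRange_eq_map, fieldRange_val, Set.image_singleton]
  rfl

theorem exists_powerBasis_gen_eq_of_finrank_prime (hp : (Module.finrank k K).Prime) {x : K}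
    (hx : x ∉ (algebraMap k K).range) : ∃ pb : PowerBasis k K, pb.gen = x := by
  have := Subalgebra.isSimpleOrder_of_finrank_prime k K hp
  have : FiniteDimensional k K := .of_finrank_pos hp.pos
  rcases eq_bot_or_eq_top (Algebra.adjoin k {x}) with h | h
  · exact absurd (Algebra.mem_bot.mp (h ▸ Algebra.subset_adjoin rfl)) hx
  · exact ⟨.ofAdjoinEqTop (Algebra.IsIntegral.isIntegral x) h, rfl⟩

theorem mem_range_of_pow_eq_one {p : ℕ} (hp : p.Prime) (hK : Module.finrank k K = p) {η : K}
    (hη : η ^ p = 1) : η ∈ (algebraMap k K).range := by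
  by_contra hηk
  have hη1 : η ≠ 1 := fun h => hηk ⟨1, by rw [h, map_one]⟩
  obtain ⟨pb, rfl⟩ := exists_powerBasis_gen_eq_of_finrank_prime (hK ▸ hp) hηk
  have : Fact p.Prime := ⟨hp⟩
  have hroot : aeval pb.gen (cyclotomic p k) = 0 := by
    rw [cyclotomic_prime, map_sum]
    simpa using (IsPrimitiveRoot.of_pow_prime_eq_one hp hη hη1).geom_sum_eq_zero hp.one_lt
  have hdeg := natDegree_le_of_dvd (minpoly.dvd k _ hroot) (cyclotomic_ne_zero p k)
  rw [pb.natDegree_minpoly, ← pb.finrank, hK, natDegree_cyclotomic, Nat.totient_prime hp]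
    at hdeg
  have := hp.pos
  omega

theorem PowerBasis.minpoly_gen_eq_X_pow_sub_C (pb : PowerBasis k K) {c : k}
    (hc : pb.gen ^ pb.dim = algebraMap k K c) : minpoly k pb.gen = X ^ pb.dim - C c :=
  (eq_of_monic_of_dvd_of_natDegree_le (minpoly.monic pb.isIntegral_gen)
    (monic_X_pow_sub_C c pb.dim_pos.ne') (minpoly.dvd k _ (by simp [hc]))
    (by rw [natDegree_X_pow_sub_C, pb.natDegree_minpoly])).symm

theorem PowerBasis.mem_range_of_algHom_apply_eq (pb : PowerBasis k K) {ω : k}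
    (hω : IsPrimitiveRoot ω pb.dim) {σ : K →ₐ[k] K} (hσ : σ pb.gen = algebraMap k K ω * pb.gen)
    {y : K} (hy : σ y = y) : y ∈ (algebraMap k K).range := by
  have hσb : ∀ i, σ (pb.basis i) = ω ^ (i : ℕ) • pb.basis i := by
    intro i
    rw [pb.basis_eq_pow, map_pow, hσ, mul_pow, ← map_pow, Algebra.smul_def]
  have hσy : σ y = ∑ i : Fin pb.dim, ω ^ (i : ℕ) • pb.basis.repr y i • pb.basis i := by
    conv_lhs => rw [← pb.basis.sum_repr y]
    simp only [map_sum, map_smul, hσb, smul_comm (pb.basis.repr y _)]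
  have hfix : ∀ i : Fin pb.dim, (ω ^ (i : ℕ) - 1) * pb.basis.repr y i = 0 := by
    refine Fintype.linearIndependent_iff.mp pb.basis.linearIndependent _ ?_
    simp only [sub_mul, one_mul, sub_smul, mul_smul, Finset.sum_sub_distrib, ← hσy,
      pb.basis.sum_repr, hy, sub_self]
  let i₀ : Fin pb.dim := ⟨0, pb.dim_pos⟩
  have hzero : ∀ i ≠ i₀, pb.basis.repr y i = 0 := fun i hi =>
    (mul_eq_zero.mp (hfix i)).resolve_left <| sub_ne_zero.mpr <|
      hω.pow_ne_one_of_pos_of_lt (fun h => hi (Fin.ext h)) i.isLt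
  refine RingHom.mem_range.mpr ⟨pb.basis.repr y i₀, ?_⟩
  calc algebraMap k K (pb.basis.repr y i₀) = pb.basis.repr y i₀ • pb.basis i₀ := by
        rw [pb.basis_eq_pow, pow_zero, Algebra.algebraMap_eq_smul_one]
    _ = ∑ i, pb.basis.repr y i • pb.basis i := (Finset.sum_eq_single_of_mem
        (f := fun i => pb.basis.repr y i • pb.basis i) i₀ (Finset.mem_univ _)
        fun i _ hi => by rw [hzero i hi, zero_smul]).symm
    _ = y := pb.basis.sum_repr y

theorem PowerBasis.exists_mul_gen_pow_mem_range (pb : PowerBasis k K) {c : k}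
    (hc : pb.gen ^ pb.dim = algebraMap k K c) {ω : k} (hω : IsPrimitiveRoot ω pb.dim) {t : K}
    (ht : t ^ pb.dim ∈ (algebraMap k K).range) :
    ∃ i, t * pb.gen ^ i ∈ (algebraMap k K).range := by
  let σ := pb.lift (algebraMap k K ω * pb.gen) (by
    rw [pb.minpoly_gen_eq_X_pow_sub_C hc, map_sub, map_pow, aeval_X, aeval_C, mul_pow, ← map_pow,
      hω.pow_eq_one, map_one, one_mul, hc, sub_self])
  have hσ : σ pb.gen = algebraMap k K ω * pb.gen := pb.lift_gen _ _
  set n := pb.dim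
  have : NeZero n := ⟨pb.dim_pos.ne'⟩
  obtain ⟨j, hj, hσt⟩ : ∃ j < n, σ t = algebraMap k K ω ^ j * t := by
    rcases eq_or_ne t 0 with rfl | ht0
    · exact ⟨0, pb.dim_pos, by simp⟩
    obtain ⟨v, hv⟩ := ht
    have hpow : (σ t / t) ^ n = 1 := by
      rw [div_pow, ← map_pow, ← hv, AlgHom.commutes, hv, div_self (pow_ne_zero _ ht0)]
    obtain ⟨j, hj, hξ⟩ :=
      (hω.map_of_injective (algebraMap k K).injective).eq_pow_of_pow_eq_one hpow
    exact ⟨j, hj, by rw [hξ, div_mul_cancel₀ _ ht0]⟩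
  refine ⟨n - j, pb.mem_range_of_algHom_apply_eq hω hσ ?_⟩
  have hωn : algebraMap k K ω ^ j * algebraMap k K ω ^ (n - j) = 1 := by
    rw [← pow_add, Nat.add_sub_cancel' hj.le, ← map_pow, hω.pow_eq_one, map_one]
  rw [map_mul, map_pow, hσt, hσ, mul_pow]
  linear_combination (t * pb.gen ^ (n - j)) * hωn

theorem finrank_eq_of_pow_eq_of_adjoin_eq_top {p : ℕ} (hp : p.Prime) {u : k}
    (hu : ∀ b : k, b ^ p ≠ u) {t : K} (ht : t ^ p = algebraMap k K u) (hK : k⟮t⟯ = ⊤) :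
    Module.finrank k K = p := by
  have hmin : minpoly k t = X ^ p - C u :=
    (minpoly.eq_of_irreducible_of_monic (X_pow_sub_C_irreducible_of_prime hp hu) (by simp [ht])
      (monic_X_pow_sub_C u hp.ne_zero)).symm
  have hint : IsIntegral k t := .of_pow hp.pos (ht ▸ isIntegral_algebraMap)
  rw [← finrank_top', ← hK, adjoin.finrank hint, hmin, natDegree_X_pow_sub_C]

theorem mem_range_of_pow_pow_eq_one {p : ℕ} (hp : p.Prime) (hK : Module.finrank k K = p)
    {u : k} (hu : ¬ IsRootOfUnityMulPow p p u) {t : K} (ht : t ^ p = algebraMap k K u) :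
    ∀ (m : ℕ) (ζ : K), ζ ^ p ^ m = 1 → ζ ∈ (algebraMap k K).range := by
  intro m
  induction m with
  | zero => intro ζ hζ; exact ⟨1, by rw [map_one, ← hζ, pow_zero, pow_one]⟩
  | succ m ih =>
    intro ζ hζ
    obtain ⟨c, hc⟩ := ih (ζ ^ p) (by rw [← pow_mul, ← pow_succ']; exact hζ)
    by_contra hζk
    have hη : IsPrimitiveRoot (ζ ^ p ^ m) p := .of_pow_prime_eq_one hp
      (by rw [← pow_mul, ← pow_succ]; exact hζ) (fun h => hζk (ih ζ h))
    obtain ⟨ω, hωη⟩ := mem_range_of_pow_eq_one hp hK hη.pow_eq_one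
    have hω : IsPrimitiveRoot ω p := .of_map_of_injective (hωη ▸ hη) (algebraMap k K).injective
    obtain ⟨pb, rfl⟩ := exists_powerBasis_gen_eq_of_finrank_prime (hK ▸ hp) hζk
    have hdim : pb.dim = p := pb.finrank ▸ hK
    obtain ⟨i, b, hb⟩ := pb.exists_mul_gen_pow_mem_range (hdim ▸ hc.symm) (hdim ▸ hω)
      ⟨u, hdim ▸ ht.symm⟩
    have hcm : c ^ p ^ m = 1 := (algebraMap k K).injective <| by
      rw [map_pow, hc, ← pow_mul, ← pow_succ', hζ, map_one]
    refine hu (.of_mul_eq_pow hp.ne_zero (c := c ^ i) (b := b)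
      (by rw [← pow_mul, mul_comm, pow_mul, hcm, one_pow]) ((algebraMap k K).injective ?_))
    rw [map_mul, map_pow, map_pow, hb, hc, ← ht, mul_pow, ← pow_mul, ← pow_mul, mul_comm i]

theorem not_isRootOfUnityMulPow_of_pow_eq {p d : ℕ} (hp : p ≠ 0)
    (hK : Module.finrank k K = p ^ d) {u : k} (hu : ¬ IsRootOfUnityMulPow p p u) {t : K}
    (ht : t ^ p ^ d = algebraMap k K u) : ¬ IsRootOfUnityMulPow p p t := fun h =>
  hu <| .of_pow_prime_pow hp (d := d) <| by
    simpa only [ht, Algebra.norm_algebraMap, hK] using (h.pow (p ^ d)).norm (k := k)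

end

theorem finrank_eq_and_rootsOfUnity_mem_range {k : Type*} [Field k] {p : ℕ}
    (hp : p.Prime) {u : k} (hu : ¬ IsRootOfUnityMulPow p p u) (d : ℕ) {K : Type*} [Field K]
    [Algebra k K] {t : K} (ht : t ^ p ^ d = algebraMap k K u) (hK : k⟮t⟯ = ⊤) :
    Module.finrank k K = p ^ d ∧
      ∀ ζ : K, (∃ m : ℕ, ζ ^ p ^ m = 1) → ζ ∈ (algebraMap k K).range := by
  induction d generalizing K with
  | zero =>
    have hbot : (⊥ : IntermediateField k K) = ⊤ := by
      rw [← hK, eq_comm, adjoin_simple_eq_bot_iff, mem_bot]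
      exact ⟨u, by rw [← ht, pow_zero, pow_one]⟩
    refine ⟨by rw [pow_zero, ← bot_eq_top_iff_finrank_eq_one, hbot], fun ζ _ => ?_⟩
    exact mem_bot.mp (hbot ▸ mem_top)
  | succ d ih =>
    let L := k⟮t ^ p⟯
    let s := AdjoinSimple.gen k (t ^ p)
    have hs : s ^ p ^ d = algebraMap k L u := Subtype.ext <| by
      rw [SubmonoidClass.coe_pow, AdjoinSimple.coe_gen, ← pow_mul, ← pow_succ']; exact ht
    obtain ⟨hkL, hμL⟩ := ih hs (adjoin_simple_gen_eq_top _)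
    have hsL := not_isRootOfUnityMulPow_of_pow_eq hp.ne_zero hkL hu hs
    have htL : t ^ p = algebraMap L K s := rfl
    have hLK : Module.finrank L K = p := finrank_eq_of_pow_eq_of_adjoin_eq_top hp
      (fun b hb => hsL (.of_pow_eq hb)) htL (adjoin_eq_top_of_adjoin_eq_top k hK)
    refine ⟨by rw [← Module.finrank_mul_finrank k L K, hkL, hLK, pow_succ], fun ζ ⟨m, hζ⟩ => ?_⟩
    obtain ⟨ζ₁, rfl⟩ := mem_range_of_pow_pow_eq_one hp hLK hsL htL m ζ hζ
    obtain ⟨ζ₀, rfl⟩ := hμL ζ₁ ⟨m, (algebraMap L K).injective (by rwa [map_pow, map_one])⟩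
    exact ⟨ζ₀, (IsScalarTower.algebraMap_apply k L K ζ₀).symm⟩

theorem stmt3_general {k K : Type*} [Field k] [Field K] [Algebra k K] (p : ℕ) (hp : p.Prime)
    (u : k)
    (h : ¬ ∃ ζ a : k, (∃ m : ℕ, ζ ^ p ^ m = 1) ∧ u = ζ * a ^ p)
    (d : ℕ) (t : K) (ht : t ^ p ^ d = algebraMap k K u)
    (hK : IntermediateField.adjoin k {t} = ⊤) :
    Module.finrank k K = p ^ d ∧
      ∀ ζ : K, (∃ m : ℕ, ζ ^ p ^ m = 1) ↔
        ∃ ζ₀ : k, (∃ m : ℕ, ζ₀ ^ p ^ m = 1) ∧ ζ = algebraMap k K ζ₀ := by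
  obtain ⟨hfin, hμ⟩ := finrank_eq_and_rootsOfUnity_mem_range hp h d ht hK
  refine ⟨hfin, fun ζ => ⟨fun hζ => ?_, ?_⟩⟩
  · obtain ⟨ζ₀, rfl⟩ := hμ ζ hζ
    obtain ⟨m, hm⟩ := hζ
    exact ⟨ζ₀, ⟨m, (algebraMap k K).injective (by rwa [map_pow, map_one])⟩, rfl⟩
  · rintro ⟨ζ₀, ⟨m, hm⟩, rfl⟩
    exact ⟨m, by rw [← map_pow, hm, map_one]⟩

theorem stmt3 {k K : Type*} [Field k] [Field K] [Algebra k K] (p : ℕ) (hp : p.Prime)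
    (hchar : (p : k) ≠ 0) (u : k) (hu : u ≠ 0)
    (h : ¬ ∃ ζ a : k, (∃ m : ℕ, ζ ^ p ^ m = 1) ∧ u = ζ * a ^ p)
    (d : ℕ) (hd : 1 ≤ d) (t : K) (ht : t ^ p ^ d = algebraMap k K u)
    (hK : IntermediateField.adjoin k {t} = ⊤) :
    Module.finrank k K = p ^ d ∧
      ∀ ζ : K, (∃ m : ℕ, ζ ^ p ^ m = 1) ↔
        ∃ ζ₀ : k, (∃ m : ℕ, ζ₀ ^ p ^ m = 1) ∧ ζ = algebraMap k K ζ₀ :=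
  stmt3_general p hp u h d t ht hK
end

section
/- Let G and H be finite groups and ψ : G → H × A an injective group homomorphism with A abelian, such that the composite G → H (projection on the first factor) is surjective. Then ψ restricts to an isomorphism from the commutator subgroup [G,G] onto [H,H] × {1}; in particular |[G,G]| = |[H,H]|. -/
namespace Subgroup

variable {H A : Type*} [Group H] [Group A]

theorem eq_prod_bot_of_map_snd_eq_bot {K : Subgroup (H × A)}
    (hK : K.map (MonoidHom.snd H A) = ⊥) :
    K = (K.map (MonoidHom.fst H A)).prod ⊥ := by
  have hsnd : ∀ x ∈ K, x.2 = 1 := fun x hx =>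
    (mem_bot.mp (hK ▸ mem_map_of_mem (MonoidHom.snd H A) hx) :)
  ext ⟨h, a⟩
  simp only [mem_prod, mem_bot, mem_map, MonoidHom.coe_fst]
  constructor
  · intro hx
    exact ⟨⟨(h, a), hx, rfl⟩, hsnd _ hx⟩
  · rintro ⟨⟨x, hx, rfl⟩, rfl⟩
    rwa [← hsnd x hx]

theorem card_prod_bot (L : Subgroup H) : Nat.card (L.prod (⊥ : Subgroup A)) = Nat.card L := by
  rw [Nat.card_congr (prodEquiv L ⊥).toEquiv, Nat.card_prod, card_bot, mul_one]

end Subgroup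

section Commutator

open Subgroup

variable {G H : Type*} [Group G] [Group H]

theorem commutator_map_of_surjective {f : G →* H} (hf : Function.Surjective f) :
    (commutator G).map f = commutator H := by
  rw [commutator_def, commutator_def, map_commutator, map_top_of_surjective f hf]

theorem commutator_map_eq_bot {A : Type*} [CommGroup A] (f : G →* A) :
    (commutator G).map f = ⊥ :=
  (Subgroup.map_eq_bot_iff _).mpr (Abelianization.commutator_subset_ker f)

theorem commutator_map_eq_prod_bot {A : Type*} [CommGroup A] {ψ : G →* H × A}
    (hsurj : Function.Surjective ((MonoidHom.fst H A).comp ψ)) :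
    (commutator G).map ψ = (commutator H).prod ⊥ := by
  have hsnd : ((commutator G).map ψ).map (MonoidHom.snd H A) = ⊥ := by
    rw [map_map, commutator_map_eq_bot]
  rw [eq_prod_bot_of_map_snd_eq_bot hsnd, map_map, commutator_map_of_surjective hsurj]

end Commutator

theorem stmt7_general {G H A : Type*} [Group G] [Group H] [CommGroup A]
    (ψ : G →* H × A) (hinj : Function.Injective ψ)
    (hsurj : Function.Surjective ((MonoidHom.fst H A).comp ψ)) :
    (commutator G).map ψ = (commutator H).prod (⊥ : Subgroup A) ∧
      Nat.card (commutator G) = Nat.card (commutator H) := by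
  have hmap := commutator_map_eq_prod_bot hsurj
  refine ⟨hmap, ?_⟩
  rw [← Subgroup.card_map_of_injective hinj, hmap, Subgroup.card_prod_bot]

theorem stmt7 {G H A : Type*} [Group G] [Finite G] [Group H] [Finite H] [CommGroup A]
    (ψ : G →* H × A) (hinj : Function.Injective ψ)
    (hsurj : Function.Surjective ((MonoidHom.fst H A).comp ψ)) :
    (commutator G).map ψ = (commutator H).prod (⊥ : Subgroup A) ∧
      Nat.card (commutator G) = Nat.card (commutator H) :=
  stmt7_general ψ hinj hsurj
end

section
/- Let p be an odd prime and u ∈ ℤ_p^× a unit of infinite order. Define the p-level ℓ = ℓ_p(u) ≥ 1 to be the integer such that the closure of the cyclic group ⟨u⟩ in ℤ_p^× decomposes as C′ × (1 + p^ℓ ℤ_p) for some subgroup C′ of the torsion subgroup. If d ≥ 1 is an integer not divisible by p, c ∈ ℤ_p^×, s = ℓ_p(u), and n_s ∈ ℤ satisfies u^{n_s} ≡ c (mod p^s), then for every t ≥ s there exists n_t ∈ ℤ with n_t ≡ n_s (mod d) and u^{n_t} ≡ c (mod p^t). -/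
/-!
Put `w = u^(-n_s) c ≡ 1 (mod p^s)`. By the level hypothesis `w` lies in the closure of `⟨u⟩`, so
`u^n₀ ≡ w (mod p^t)` for some `n₀`. Then `u^n₀ ≡ 1 (mod p^s)`, and raising to the `p`-th power
gains a factor of `p` (as `s ≥ 1`), so `u^(n₀ p^(t-s)) ≡ 1 (mod p^t)`. Since `p ∤ d`, pick `e` with
`d e ≡ 1 (mod p^(t-s))`; then `u^(n₀ d e) ≡ u^n₀ ≡ w (mod p^t)`, and `n_t = n_s + d e n₀` works.
-/

open Finset

theorem natCast_dvd_geom_sum_of_dvd_sub_one {R : Type*} [CommRing R] {p : ℕ} {x : R}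
    (hx : (p : R) ∣ x - 1) : (p : R) ∣ ∑ i ∈ range p, x ^ i := by
  rw [← Ideal.Quotient.eq_zero_iff_dvd] at hx ⊢
  have hx1 : Ideal.Quotient.mk (Ideal.span {(p : R)}) x = 1 := by
    rwa [map_sub, map_one, sub_eq_zero] at hx
  simp only [map_sum, map_pow, hx1, one_pow, sum_const, card_range, nsmul_one]
  rw [← map_natCast (Ideal.Quotient.mk _), Ideal.Quotient.eq_zero_iff_dvd]

theorem natCast_pow_succ_dvd_pow_sub_one {R : Type*} [CommRing R] {p s : ℕ} {x : R} (hs : 1 ≤ s)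
    (hx : (p : R) ^ s ∣ x - 1) : (p : R) ^ (s + 1) ∣ x ^ p - 1 := by
  rw [← geom_sum_mul, pow_succ']
  exact mul_dvd_mul (natCast_dvd_geom_sum_of_dvd_sub_one ((dvd_pow_self _ (by omega)).trans hx)) hx

theorem natCast_pow_add_dvd_pow_pow_sub_one {R : Type*} [CommRing R] {p s : ℕ} {x : R}
    (hs : 1 ≤ s) (hx : (p : R) ^ s ∣ x - 1) (k : ℕ) :
    (p : R) ^ (s + k) ∣ x ^ p ^ k - 1 := by
  induction k with
  | zero => simpa using hx
  | succ k ih =>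
    rw [pow_succ, pow_mul, ← add_assoc]
    exact natCast_pow_succ_dvd_pow_sub_one (by omega) ih

theorem Ideal.Quotient.unitsMap_mk_eq_iff {R : Type*} [CommRing R] {I : Ideal R} {a b : Rˣ} :
    Units.map (Ideal.Quotient.mk I).toMonoidHom a =
        Units.map (Ideal.Quotient.mk I).toMonoidHom b ↔ (a : R) - b ∈ I :=
  Units.ext_iff.trans (Ideal.Quotient.mk_eq_mk_iff_sub_mem _ _)

theorem PadicInt.exists_sub_mem_span_pow_of_mem_closure {p : ℕ} [Fact p.Prime] {S : Set ℤ_[p]}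
    {x : ℤ_[p]} (hx : x ∈ closure S) (t : ℕ) :
    ∃ y ∈ S, x - y ∈ Ideal.span {(p : ℤ_[p]) ^ t} := by
  obtain ⟨y, hyS, hxy⟩ := Metric.mem_closure_iff.mp hx _
    (zpow_pos (Nat.cast_pos.mpr (Fact.out : p.Prime).pos) (-(t : ℤ)))
  exact ⟨y, hyS, (PadicInt.norm_le_pow_iff_mem_span_pow _ _).mp (dist_eq_norm x y ▸ hxy.le)⟩

theorem exists_zpow_mul_eq_self_of_zpow_eq_one {G : Type*} [Group G] {b : G} {d N : ℤ}
    (hb : b ^ N = 1) (hdN : IsCoprime d N) : ∃ e : ℤ, b ^ (d * e) = b := by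
  obtain ⟨e, f, hef⟩ := hdN
  refine ⟨e, ?_⟩
  calc b ^ (d * e) = b ^ (e * d + f * N) := by
        rw [zpow_add, mul_comm f, zpow_mul b N, hb, one_zpow, mul_one, mul_comm]
    _ = b := by rw [hef, zpow_one]

theorem stmt9_general (p : ℕ) [Fact p.Prime]
    (u : (PadicInt p)ˣ)
    (s : ℕ) (hs : 1 ≤ s) (C' : Subgroup (PadicInt p)ˣ)
    (hlevel : closure {x : PadicInt p | ∃ n : ℤ, x = ((u ^ n : (PadicInt p)ˣ) : PadicInt p)} =
      {x : PadicInt p | ∃ c w : (PadicInt p)ˣ, c ∈ C' ∧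
        ((w : PadicInt p) - 1 ∈ Ideal.span {(p : PadicInt p) ^ s}) ∧
        x = ((c * w : (PadicInt p)ˣ) : PadicInt p)})
    (d : ℕ) (hpd : ¬ (p ∣ d))
    (c : (PadicInt p)ˣ) (ns : ℤ)
    (hns : ((u ^ ns : (PadicInt p)ˣ) : PadicInt p) - (c : PadicInt p) ∈
      Ideal.span {(p : PadicInt p) ^ s}) :
    ∀ t ≥ s, ∃ nt : ℤ, nt ≡ ns [ZMOD (d : ℤ)] ∧
      ((u ^ nt : (PadicInt p)ˣ) : PadicInt p) - (c : PadicInt p) ∈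
        Ideal.span {(p : PadicInt p) ^ t} := by
  intro t hts
  set π := Units.map (Ideal.Quotient.mk (Ideal.span {(p : ℤ_[p]) ^ t})).toMonoidHom
  let w := (u ^ ns)⁻¹ * c
  have hw : (w : ℤ_[p]) - 1 ∈ Ideal.span {(p : ℤ_[p]) ^ s} := by
    rw [← Units.val_one, ← Ideal.Quotient.unitsMap_mk_eq_iff, map_mul, map_inv, map_one,
      inv_mul_eq_one, Ideal.Quotient.unitsMap_mk_eq_iff.mpr hns]
  have hw_closure : (w : ℤ_[p]) ∈ closure {x : ℤ_[p] | ∃ n : ℤ, x = ↑(u ^ n)} := by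
    rw [hlevel]
    exact ⟨1, w, C'.one_mem, hw, by rw [one_mul]⟩
  obtain ⟨_, ⟨n0, rfl⟩, hn0⟩ := PadicInt.exists_sub_mem_span_pow_of_mem_closure hw_closure t
  have hn0s : ((u ^ n0 : ℤ_[p]ˣ) : ℤ_[p]) - 1 ∈ Ideal.span {(p : ℤ_[p]) ^ s} := by
    have hle := Ideal.span_singleton_le_span_singleton.mpr (pow_dvd_pow (p : ℤ_[p]) hts)
    simpa only [sub_sub_sub_cancel_left] using Ideal.sub_mem _ hw (hle hn0)
  have hpow : π (u ^ n0) ^ ((p ^ (t - s) : ℕ) : ℤ) = 1 := by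
    rw [zpow_natCast, ← map_pow, ← map_one π, Ideal.Quotient.unitsMap_mk_eq_iff,
      Ideal.mem_span_singleton]
    push_cast
    simpa [Nat.add_sub_cancel' hts] using
      natCast_pow_add_dvd_pow_pow_sub_one hs (Ideal.mem_span_singleton.mp hn0s) (t - s)
  have hcop : IsCoprime (d : ℤ) ((p ^ (t - s) : ℕ) : ℤ) := Nat.isCoprime_iff_coprime.mpr
    (((Fact.out : p.Prime).coprime_iff_not_dvd.mpr hpd).symm.pow_right _)
  obtain ⟨e, he⟩ := exists_zpow_mul_eq_self_of_zpow_eq_one hpow hcop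
  refine ⟨ns + d * (e * n0), Int.add_mul_emod_self_left _ _ _, ?_⟩
  rw [← Ideal.Quotient.unitsMap_mk_eq_iff]
  calc π (u ^ (ns + d * (e * n0))) = π (u ^ ns) * π (u ^ n0) ^ (d * e) := by
        rw [← map_zpow, ← map_mul, ← zpow_mul, ← zpow_add]; ring_nf
    _ = π c := by
        rw [he, (Ideal.Quotient.unitsMap_mk_eq_iff.mpr hn0).symm, ← map_mul,
          mul_inv_cancel_left (u ^ ns) c]

theorem stmt9 (p : ℕ) [Fact p.Prime] (hodd : Odd p)
    (u : (PadicInt p)ˣ) (hu : ¬ IsOfFinOrder u)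
    (s : ℕ) (hs : 1 ≤ s) (C' : Subgroup (PadicInt p)ˣ)
    (hC' : ∀ c ∈ C', IsOfFinOrder c)
    (hlevel : closure {x : PadicInt p | ∃ n : ℤ, x = ((u ^ n : (PadicInt p)ˣ) : PadicInt p)} =
      {x : PadicInt p | ∃ c w : (PadicInt p)ˣ, c ∈ C' ∧
        ((w : PadicInt p) - 1 ∈ Ideal.span {(p : PadicInt p) ^ s}) ∧
        x = ((c * w : (PadicInt p)ˣ) : PadicInt p)})
    (d : ℕ) (hd : 1 ≤ d) (hpd : ¬ (p ∣ d))
    (c : (PadicInt p)ˣ) (ns : ℤ)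
    (hns : ((u ^ ns : (PadicInt p)ˣ) : PadicInt p) - (c : PadicInt p) ∈
      Ideal.span {(p : PadicInt p) ^ s}) :
    ∀ t ≥ s, ∃ nt : ℤ, nt ≡ ns [ZMOD (d : ℤ)] ∧
      ((u ^ nt : (PadicInt p)ˣ) : PadicInt p) - (c : PadicInt p) ∈
        Ideal.span {(p : PadicInt p) ^ t} :=
  stmt9_general p u s hs C' hlevel d hpd c ns hns
end

section
/- Let p be an odd prime and u ∈ ℤ_p^× a unit not a root of unity. Then there exist a subgroup C′ of the group C of roots of unity in ℚ_p and an integer ℓ ≥ 1 such that the closure of the cyclic subgroup generated by u in ℤ_p^× equals C′ × (1 + p^ℓℤ_p). -/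
/-!
Hensel's lemma for `X ^ (p - 1) - 1` writes `u = ζ v` with `ζ ^ (p - 1) = 1` and `v ≡ 1 mod p`;
as `u` has infinite order, `v ≠ 1`, and `p ^ ℓ` exactly divides `v - 1`. Lifting the exponent
along the order `d` of `ζ`, which is prime to `p`, and then along powers of the odd prime `p`,
shows that `p ^ (ℓ + k)` exactly divides `g ^ (p ^ k) - 1` for `g = u ^ d = v ^ d`. A unit `h` with
`p ^ j` exactly dividing `h - 1` generates `1 + pʲℤ_p` modulo `1 + pʲ⁺¹ℤ_p`, so the powers of `g`
are dense in `1 + p^ℓℤ_p`, and the powers `u ^ (a + d m) = ζ ^ a v ^ a g ^ m` are dense in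
`⟨ζ⟩ (1 + p^ℓℤ_p)`, a union of cosets of `p^ℓℤ_p` containing every power of `u`.
-/

namespace PadicInt

variable {p : ℕ} [hp : Fact p.Prime]

variable (p) in
/-- The subgroup `1 + pⁿℤ_[p]` of `ℤ_[p]ˣ`. -/
noncomputable def higherUnits (n : ℕ) : Subgroup ℤ_[p]ˣ :=
  (Units.map (toZModPow n : ℤ_[p] →+* ZMod (p ^ n)).toMonoidHom).ker

theorem inv_mul_mem_higherUnits_iff {n : ℕ} {a b : ℤ_[p]ˣ} :
    a⁻¹ * b ∈ higherUnits p n ↔ (p : ℤ_[p]) ^ n ∣ b - a := by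
  rw [higherUnits, MonoidHom.mem_ker, map_mul, map_inv, inv_mul_eq_one, Units.ext_iff,
    ← Ideal.mem_span_singleton, ← ker_toZModPow, RingHom.mem_ker, map_sub, sub_eq_zero, eq_comm]
  rfl

theorem mem_higherUnits {n : ℕ} {g : ℤ_[p]ˣ} :
    g ∈ higherUnits p n ↔ (p : ℤ_[p]) ^ n ∣ g - 1 := by
  simpa using inv_mul_mem_higherUnits_iff (n := n) (a := 1) (b := g)

theorem higherUnits_anti : Antitone (higherUnits p) := fun _ _ h _ hg =>
  mem_higherUnits.2 ((pow_dvd_pow _ h).trans (mem_higherUnits.1 hg))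

theorem exists_mem_higherUnits_eq_mul {n : ℕ} (hn : 1 ≤ n) {x : ℤ_[p]} {c : ℤ_[p]ˣ}
    (h : (p : ℤ_[p]) ^ n ∣ x - c) : ∃ w ∈ higherUnits p n, x = ↑(c * w) := by
  have hx : IsUnit x := by
    by_contra hx
    rw [not_isUnit_iff, norm_lt_one_iff_dvd] at hx
    refine irreducible_p.not_dvd_isUnit c.isUnit ?_
    simpa using dvd_sub hx ((dvd_pow_self _ (by omega)).trans h)
  obtain ⟨x, rfl⟩ := hx
  exact ⟨c⁻¹ * x, inv_mul_mem_higherUnits_iff.2 h, by rw [mul_inv_cancel_left]⟩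

theorem exists_eq_rootOfUnity_mul_higherUnits (u : ℤ_[p]ˣ) :
    ∃ ζ v : ℤ_[p]ˣ, ζ ^ (p - 1) = 1 ∧ v ∈ higherUnits p 1 ∧ u = ζ * v := by
  have hp1 : p - 1 ≠ 0 := by have := hp.out.one_lt; omega
  set F : Polynomial ℤ_[p] := Polynomial.X ^ (p - 1) - 1
  have hF' : ‖F.derivative.aeval (u : ℤ_[p])‖ = 1 := by simp [F, Polynomial.derivative_X_pow]
  have hF : ‖F.aeval (u : ℤ_[p])‖ < 1 := by
    rw [norm_lt_one_iff_dvd, ← Ideal.mem_span_singleton, ← maximalIdeal_eq_span_p, ← ker_toZMod,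
      RingHom.mem_ker]
    simp [F, ZMod.pow_card_sub_one_eq_one (u.isUnit.map toZMod).ne_zero]
  obtain ⟨z, hz, hzu, -⟩ := hensels_lemma (F := F) (a := (u : ℤ_[p])) (by rw [hF']; simpa using hF)
  have hz1 : z ^ (p - 1) = 1 := by simpa [F, sub_eq_zero] using hz
  refine ⟨Units.ofPowEqOne z _ hz1 hp1, _, Units.pow_ofPowEqOne hz1 hp1,
    inv_mul_mem_higherUnits_iff.2 ?_, (mul_inv_cancel_left _ u).symm⟩
  rw [pow_one, ← norm_lt_one_iff_dvd, norm_sub_rev]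
  simpa using hzu.trans_eq hF'

theorem emultiplicity_pow_sub_one_of_not_dvd {g : ℤ_[p]ˣ} (hg : g ∈ higherUnits p 1) {n : ℕ}
    (hn : ¬p ∣ n) :
    emultiplicity (p : ℤ_[p]) ((g : ℤ_[p]) ^ n - 1) =
      emultiplicity (p : ℤ_[p]) ((g : ℤ_[p]) - 1) := by
  simpa using emultiplicity_pow_sub_pow_of_prime prime_p (y := 1)
    (by simpa using mem_higherUnits.1 hg) (irreducible_p.not_dvd_isUnit g.isUnit)
    (by rwa [← norm_lt_one_iff_dvd, norm_natCast_lt_one_iff])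

theorem emultiplicity_pow_prime_pow_sub_one (hodd : Odd p) {g : ℤ_[p]ˣ}
    (hg : g ∈ higherUnits p 1) (k : ℕ) :
    emultiplicity (p : ℤ_[p]) ((g : ℤ_[p]) ^ p ^ k - 1) =
      emultiplicity (p : ℤ_[p]) ((g : ℤ_[p]) - 1) + k := by
  simpa using emultiplicity_pow_prime_pow_sub_pow_prime_pow prime_p hodd (y := 1)
    (by simpa using mem_higherUnits.1 hg) (irreducible_p.not_dvd_isUnit g.isUnit) k

theorem eq_one_of_pow_eq_one {g : ℤ_[p]ˣ} (hg : g ∈ higherUnits p 1) {n : ℕ} (hgn : g ^ n = 1)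
    (hn : ¬p ∣ n) : g = 1 := by
  have h := emultiplicity_pow_sub_one_of_not_dvd hg hn
  rw [← Units.val_pow_eq_pow_val, hgn, Units.val_one, sub_self, emultiplicity_zero, eq_comm,
    emultiplicity_eq_top] at h
  by_contra hne
  exact h (FiniteMultiplicity.of_not_isUnit prime_p.not_isUnit
    (sub_ne_zero.2 (Units.val_eq_one.not.2 hne)))

theorem higherUnits_le_zpowers_sup_succ {h : ℤ_[p]ˣ} {j : ℕ} (hj : 1 ≤ j)
    (hh : emultiplicity (p : ℤ_[p]) ((h : ℤ_[p]) - 1) = j) :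
    higherUnits p j ≤ Subgroup.zpowers h ⊔ higherUnits p (j + 1) := by
  obtain ⟨⟨y, hy⟩, hndvd⟩ := emultiplicity_eq_coe.1 hh
  have hy_unit : IsUnit y := by
    by_contra hy'
    rw [not_isUnit_iff, norm_lt_one_iff_dvd] at hy'
    exact hndvd (by rw [hy, pow_succ]; exact mul_dvd_mul_left _ hy')
  obtain ⟨ε, rfl⟩ := hy_unit
  intro w hw
  obtain ⟨s, hs⟩ := mem_higherUnits.1 hw
  obtain ⟨m, -, hm⟩ := exists_mem_range (s * ((ε⁻¹ : ℤ_[p]ˣ) : ℤ_[p]))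
  rw [maximalIdeal_eq_span_p, Ideal.mem_span_singleton] at hm
  refine Subgroup.mem_sup.2 ⟨h ^ m, pow_mem (Subgroup.mem_zpowers h) m, (h ^ m)⁻¹ * w,
    inv_mul_mem_higherUnits_iff.2 ?_, mul_inv_cancel_left _ _⟩
  -- `(1 + pʲε) ^ m ≡ 1 + m pʲε ≡ 1 + pʲs` modulo `p ^ (j + 1)`, as `2 j ≥ j + 1`
  have hlin : (p : ℤ_[p]) ^ (j + 1) ∣ (p : ℤ_[p]) ^ j * (ε * (s * ↑ε⁻¹ - m)) := by
    rw [pow_succ]; exact mul_dvd_mul_left _ (hm.mul_left _)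
  have hsq : (p : ℤ_[p]) ^ (j + 1) ∣ ((p : ℤ_[p]) ^ j * ε) ^ 2 := by
    rw [mul_pow, ← pow_mul]; exact (pow_dvd_pow _ (by omega)).mul_right _
  convert dvd_sub hlin (hsq.trans (sq_dvd_add_pow_sub_sub ((p : ℤ_[p]) ^ j * ε) 1 m)) using 1
  rw [Units.val_pow_eq_pow_val, show (h : ℤ_[p]) = 1 + p ^ j * ε by linear_combination hy]
  linear_combination hs - (p : ℤ_[p]) ^ j * s * ε.mul_inv

theorem higherUnits_le_zpowers_sup (hodd : Odd p) {g : ℤ_[p]ˣ} {ℓ : ℕ} (hℓ : 1 ≤ ℓ)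
    (hg : emultiplicity (p : ℤ_[p]) ((g : ℤ_[p]) - 1) = ℓ) (k : ℕ) :
    higherUnits p ℓ ≤ Subgroup.zpowers g ⊔ higherUnits p (ℓ + k) := by
  induction k with
  | zero => exact le_sup_right
  | succ k ih =>
    have hg1 : g ∈ higherUnits p 1 :=
      higherUnits_anti hℓ (mem_higherUnits.2 (emultiplicity_eq_coe.1 hg).1)
    have hgk : emultiplicity (p : ℤ_[p]) (((g ^ p ^ k : ℤ_[p]ˣ) : ℤ_[p]) - 1) = ↑(ℓ + k) := by
      rw [Units.val_pow_eq_pow_val, emultiplicity_pow_prime_pow_sub_one hodd hg1, hg, Nat.cast_add]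
    refine ih.trans (sup_le le_sup_left
      ((higherUnits_le_zpowers_sup_succ (by omega) hgk).trans (sup_le ?_ le_sup_right)))
    exact (Subgroup.zpowers_le.2 (pow_mem (Subgroup.mem_zpowers g) _)).trans le_sup_left

theorem mem_closure_iff_forall_pow_dvd {s : Set ℤ_[p]} {x : ℤ_[p]} :
    x ∈ closure s ↔ ∀ k : ℕ, ∃ y ∈ s, (p : ℤ_[p]) ^ k ∣ x - y := by
  simp_rw [Metric.mem_closure_iff, dist_eq_norm, ← Ideal.mem_span_singleton,
    ← norm_le_pow_iff_mem_span_pow]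
  constructor
  · intro h k
    obtain ⟨y, hy, hxy⟩ := h _ (zpow_pos (by exact_mod_cast hp.out.pos : (0 : ℝ) < p) (-(k : ℤ)))
    exact ⟨y, hy, hxy.le⟩
  · intro h ε hε
    obtain ⟨k, hk⟩ := exists_pow_neg_lt p hε
    obtain ⟨y, hy, hxy⟩ := h k
    exact ⟨y, hy, hxy.trans_lt hk⟩

theorem closure_zpow_mul_eq (hodd : Odd p) {ζ v : ℤ_[p]ˣ} (hζ : ¬p ∣ orderOf ζ) {ℓ : ℕ}
    (hℓ : 1 ≤ ℓ) (hv : emultiplicity (p : ℤ_[p]) ((v : ℤ_[p]) - 1) = ℓ) :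
    closure {x : ℤ_[p] | ∃ n : ℤ, x = ↑((ζ * v) ^ n)} =
      {x | ∃ c ∈ Subgroup.zpowers ζ, (p : ℤ_[p]) ^ ℓ ∣ x - c} := by
  have hvℓ : v ∈ higherUnits p ℓ := mem_higherUnits.2 (emultiplicity_eq_coe.1 hv).1
  ext x
  rw [mem_closure_iff_forall_pow_dvd]
  constructor
  · intro h
    obtain ⟨_, ⟨n, rfl⟩, hxn⟩ := h ℓ
    refine ⟨ζ ^ n, zpow_mem (Subgroup.mem_zpowers ζ) n, ?_⟩
    have hn : (p : ℤ_[p]) ^ ℓ ∣ ↑((ζ * v) ^ n) - ↑(ζ ^ n) := inv_mul_mem_higherUnits_iff.1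
      (by rw [mul_zpow, inv_mul_cancel_left]; exact zpow_mem hvℓ n)
    simpa using dvd_add hxn hn
  · rintro ⟨c, hc, hxc⟩ k
    obtain ⟨w, hw, rfl⟩ := exists_mem_higherUnits_eq_mul hℓ hxc
    obtain ⟨a, rfl⟩ := Subgroup.mem_zpowers_iff.1 hc
    have hg : emultiplicity (p : ℤ_[p]) (↑((ζ * v) ^ orderOf ζ) - 1) = ℓ := by
      rw [mul_pow, pow_orderOf_eq_one, one_mul, Units.val_pow_eq_pow_val,
        emultiplicity_pow_sub_one_of_not_dvd (higherUnits_anti hℓ hvℓ) hζ, hv]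
    obtain ⟨_, ⟨m, rfl⟩, z, hz, hmz⟩ := Subgroup.mem_sup.1
      (higherUnits_le_zpowers_sup hodd hℓ hg k (mul_mem (zpow_mem hvℓ (-a)) hw))
    refine ⟨_, ⟨a + orderOf ζ * m, rfl⟩, ?_⟩
    have hxz : ζ ^ a * w = (ζ * v) ^ (a + orderOf ζ * m) * z := by
      rw [zpow_add, zpow_mul, zpow_natCast, mul_assoc, hmz, mul_zpow, zpow_neg, mul_assoc,
        mul_inv_cancel_left]
    rw [hxz]
    exact inv_mul_mem_higherUnits_iff.1
      (by rw [inv_mul_cancel_left]; exact higherUnits_anti (by omega) hz)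

theorem setOf_mul_mem_higherUnits_eq {ℓ : ℕ} (hℓ : 1 ≤ ℓ) (C : Subgroup ℤ_[p]ˣ) :
    {x : ℤ_[p] | ∃ c w : ℤ_[p]ˣ, c ∈ C ∧ (w : ℤ_[p]) - 1 ∈ Ideal.span {(p : ℤ_[p]) ^ ℓ} ∧
      x = ↑(c * w)} = {x | ∃ c ∈ C, (p : ℤ_[p]) ^ ℓ ∣ x - c} := by
  ext x
  simp only [Set.mem_ofPred_eq, Ideal.mem_span_singleton, ← mem_higherUnits]
  constructor
  · rintro ⟨c, w, hc, hw, rfl⟩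
    exact ⟨c, hc, inv_mul_mem_higherUnits_iff.1 (by rwa [inv_mul_cancel_left])⟩
  · rintro ⟨c, hc, hxc⟩
    obtain ⟨w, hw, rfl⟩ := exists_mem_higherUnits_eq_mul hℓ hxc
    exact ⟨c, w, hc, hw, rfl⟩

end PadicInt

theorem stmt10 (p : ℕ) [Fact p.Prime] (hodd : Odd p)
    (u : (PadicInt p)ˣ) (hu : ¬ IsOfFinOrder u) :
    ∃ (C' : Subgroup (PadicInt p)ˣ) (ℓ : ℕ), 1 ≤ ℓ ∧
      (∀ c ∈ C', IsOfFinOrder c) ∧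
      (∀ c ∈ C', ((c : PadicInt p) - 1 ∈ Ideal.span {(p : PadicInt p) ^ ℓ}) → c = 1) ∧
      closure {x : PadicInt p | ∃ n : ℤ, x = ((u ^ n : (PadicInt p)ˣ) : PadicInt p)} =
        {x : PadicInt p | ∃ c w : (PadicInt p)ˣ, c ∈ C' ∧
          ((w : PadicInt p) - 1 ∈ Ideal.span {(p : PadicInt p) ^ ℓ}) ∧
          x = ((c * w : (PadicInt p)ˣ) : PadicInt p)} := by
  have hp1 : 1 < p := Fact.out (p := p.Prime) |>.one_lt
  obtain ⟨ζ, v, hζ, hv, rfl⟩ := PadicInt.exists_eq_rootOfUnity_mul_higherUnits u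
  have hζfin : IsOfFinOrder ζ := isOfFinOrder_iff_pow_eq_one.2 ⟨p - 1, by omega, hζ⟩
  have hpζ : ¬p ∣ orderOf ζ := fun h => by
    have := Nat.le_of_dvd (by omega) (h.trans (orderOf_dvd_of_pow_eq_one hζ)); omega
  have hv1 : (v : PadicInt p) - 1 ≠ 0 := fun h => hu <| by
    rwa [Units.val_eq_one.1 (sub_eq_zero.1 h), mul_one]
  obtain ⟨ℓ, hℓ⟩ : ∃ ℓ : ℕ, emultiplicity (p : PadicInt p) ((v : PadicInt p) - 1) = ℓ :=
    ⟨_, (FiniteMultiplicity.of_not_isUnit PadicInt.prime_p.not_isUnit hv1)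
      |>.emultiplicity_eq_multiplicity⟩
  have hℓ1 : 1 ≤ ℓ := Nat.one_le_iff_ne_zero.2 <| by
    rintro rfl; exact (emultiplicity_eq_coe.1 hℓ).2 (by simpa using PadicInt.mem_higherUnits.1 hv)
  refine ⟨Subgroup.zpowers ζ, ℓ, hℓ1, fun c hc => hζfin.of_mem_zpowers hc, fun c hc hcℓ => ?_, ?_⟩
  · refine PadicInt.eq_one_of_pow_eq_one (PadicInt.higherUnits_anti hℓ1 ?_)
      (orderOf_dvd_iff_pow_eq_one.1 (orderOf_dvd_of_mem_zpowers hc)) hpζ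
    exact PadicInt.mem_higherUnits.2 (Ideal.mem_span_singleton.1 hcℓ)
  · rw [PadicInt.closure_zpow_mul_eq hodd hpζ hℓ1 hℓ, PadicInt.setOf_mul_mem_higherUnits_eq hℓ1]
end

section
/- Let p be a prime and r a positive integer with p ≡ 1 (mod r). Let 𝒪 = ℤ[1/p]. If A ∈ SL₂(𝒪) has diagonal entries 1 − p^α and 1 − p^β for some integers α, β, and A = E₁₂(a)E₂₁(b)E₁₂(c)E₂₁(d) for some a,b,c,d ∈ 𝒪, then A ≡ ±[[0,1],[−1,0]] modulo r𝒪. -/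
/-!
Reduction modulo `r` sends `p`, hence every `p ^ n`, to `1`. The lower right entry of
`E₁₂(a) E₂₁(b) E₁₂(c) E₂₁(d)` is `1 + b c`, so `b c = -p ^ β`: then `b` is a unit of `ℤ[1/p]`,
i.e. `±p ^ n`, so `b ≡ ±1` and `c ≡ ∓1`. Both diagonal entries vanish modulo `r`, and since
`1 + b c ≡ 0` the off-diagonal entries reduce to `c` and `b`.
-/

/-- The ring ℤ[1/p]. -/
abbrev ZInvP (p : ℕ) := Localization.Away (p : ℤ)

local notation "E₁₂" x:max => !![1, x; 0, 1]
local notation "E₂₁" x:max => !![1, 0; x, 1]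

theorem map_units_zpow_eq_one {M N F : Type*} [Monoid M] [Monoid N] [FunLike F M N]
    [MonoidHomClass F M N] (f : F) {u : Mˣ} (hu : f u = 1) (n : ℤ) : f ↑(u ^ n) = 1 := by
  have hu' : Units.map (f : M →* N) u = 1 := Units.ext hu
  have h := congrArg Units.val (map_zpow (Units.map (f : M →* N)) u n)
  rwa [Units.coe_map, hu', one_zpow, Units.val_one] at h

theorem Ideal.Quotient.mk_span_natCast_eq_one {R : Type*} [CommRing R] {r n : ℕ}
    (h : (r : ℤ) ∣ (n : ℤ) - 1) : Ideal.Quotient.mk (Ideal.span {(r : R)}) n = 1 := by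
  rw [← map_one (Ideal.Quotient.mk _), Ideal.Quotient.mk_eq_mk_iff_sub_mem,
    Ideal.mem_span_singleton]
  simpa using map_dvd (Int.castRingHom R) h

theorem map_elementary_prod_eq_smul_of_diag_eq_zero {R S : Type*} [CommRing R] [CommRing S]
    (f : R →+* S) {a b c d : R}
    (h00 : f ((E₁₂ a * E₂₁ b * E₁₂ c * E₂₁ d) 0 0) = 0)
    (hbc : f b * f c = -1) (hb : f b * f b = 1) :
    (E₁₂ a * E₂₁ b * E₁₂ c * E₂₁ d).map f = (-f b) • !![0, 1; -1, 0] := by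
  have hc : f c = -f b := by linear_combination f b * hbc - f c * hb
  ext i j
  fin_cases i <;> fin_cases j <;> simp [hc] at h00 ⊢ <;> grind

namespace ZInvP

variable {p : ℕ} {up : (ZInvP p)ˣ}

theorem units_eq_zpow_or_neg_zpow (hp : p.Prime)
    (hup : (up : ZInvP p) = algebraMap ℤ (ZInvP p) p) (x : (ZInvP p)ˣ) :
    ∃ n : ℤ, x = up ^ n ∨ x = -up ^ n := by
  have hinj : Function.Injective (algebraMap ℤ (ZInvP p)) :=
    IsLocalization.injective _ (powers_le_nonZeroDivisors_of_noZeroDivisors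
      (by exact_mod_cast hp.ne_zero : (p : ℤ) ≠ 0))
  obtain ⟨⟨m, _, k, rfl⟩, hm⟩ := IsLocalization.surj (Submonoid.powers (p : ℤ)) (x : ZInvP p)
  obtain ⟨⟨m', _, k', rfl⟩, hm'⟩ :=
    IsLocalization.surj (Submonoid.powers (p : ℤ)) ((x⁻¹ : (ZInvP p)ˣ) : ZInvP p)
  rw [map_pow, ← hup] at hm hm'
  -- `x = m / p ^ k` and `x⁻¹ = m' / p ^ k'`, so `m m'` is a power of `p`
  have hmm' : m * m' = (p : ℤ) ^ (k + k') := by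
    apply hinj
    rw [map_mul, ← hm, ← hm', map_pow, ← hup]
    linear_combination ((up : ZInvP p) ^ k * up ^ k') * x.mul_inv
  obtain ⟨j, -, hj⟩ := (dvd_prime_pow (Nat.prime_iff_prime_int.mp hp) _).mp (Dvd.intro _ hmm')
  have hx : x * up ^ k = up ^ j ∨ x * up ^ k = -up ^ j := by
    rcases Int.associated_iff.mp hj with rfl | rfl
    · left; ext; rw [Units.val_mul, Units.val_pow_eq_pow_val, hm]; simp [hup]
    · right; ext; rw [Units.val_mul, Units.val_pow_eq_pow_val, hm]; simp [hup]
  refine ⟨j - k, ?_⟩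
  rw [zpow_sub, zpow_natCast, zpow_natCast, ← mul_inv_cancel_right x (up ^ k)]
  rcases hx with h | h
  · left; rw [h]
  · right; rw [h]; exact neg_mul (up ^ j) (up ^ k)⁻¹

variable {S : Type*} [CommRing S] {f : ZInvP p →+* S}

theorem map_units_eq_one_or_neg_one (hp : p.Prime)
    (hup : (up : ZInvP p) = algebraMap ℤ (ZInvP p) p) (hf : f up = 1) (x : (ZInvP p)ˣ) :
    f x = 1 ∨ f x = -1 := by
  obtain ⟨n, rfl | rfl⟩ := units_eq_zpow_or_neg_zpow hp hup x
  · exact .inl (map_units_zpow_eq_one f hf n)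
  · exact .inr (by rw [Units.val_neg, map_neg, map_units_zpow_eq_one f hf n])

theorem exists_map_elementary_prod_eq_smul (hp : p.Prime)
    (hup : (up : ZInvP p) = algebraMap ℤ (ZInvP p) p) (hf : f up = 1)
    {a b c d : ZInvP p} {α β : ℤ}
    (h00 : (E₁₂ a * E₂₁ b * E₁₂ c * E₂₁ d) 0 0 = 1 - ((up ^ α : (ZInvP p)ˣ) : ZInvP p))
    (h11 : (E₁₂ a * E₂₁ b * E₁₂ c * E₂₁ d) 1 1 = 1 - ((up ^ β : (ZInvP p)ˣ) : ZInvP p)) :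
    ∃ ε : ZInvP p, (ε = 1 ∨ ε = -1) ∧
      (E₁₂ a * E₂₁ b * E₁₂ c * E₂₁ d).map f = (ε • !![0, 1; -1, 0]).map f := by
  have hzpow := map_units_zpow_eq_one f hf
  have hbc : b * c = -(up ^ β : (ZInvP p)ˣ) := by
    have h11' : (E₁₂ a * E₂₁ b * E₁₂ c * E₂₁ d) 1 1 = b * c + 1 := by simp
    linear_combination h11'.symm.trans h11
  obtain ⟨w, rfl⟩ : IsUnit b := isUnit_of_mul_isUnit_left (hbc ▸ (up ^ β).isUnit.neg)
  have hw := map_units_eq_one_or_neg_one hp hup hf w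
  obtain ⟨ε, hε, hεw⟩ : ∃ ε : ZInvP p, (ε = 1 ∨ ε = -1) ∧ f ε = -f w := by
    rcases hw with h | h
    · exact ⟨-1, .inr rfl, by rw [h, map_neg, map_one]⟩
    · exact ⟨1, .inl rfl, by rw [h, map_one, neg_neg]⟩
  refine ⟨ε, hε, ?_⟩
  rw [map_elementary_prod_eq_smul_of_diag_eq_zero f ?_ ?_ ?_, ← hεw]
  · ext i j
    fin_cases i <;> fin_cases j <;> simp
  · rw [h00, map_sub, map_one, hzpow, sub_self]
  · rw [← map_mul, hbc, map_neg, hzpow]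
  · rcases hw with h | h <;> rw [h] <;> norm_num

end ZInvP

theorem stmt14_general (p r : ℕ) (hp : p.Prime) (hpr : (r : ℤ) ∣ (p : ℤ) - 1)
    (up : (ZInvP p)ˣ) (hup : (up : ZInvP p) = algebraMap ℤ (ZInvP p) (p : ℤ))
    (a b c d : ZInvP p) (α β : ℤ) (A : Matrix (Fin 2) (Fin 2) (ZInvP p))
    (hA : A = !![1, a; 0, 1] * !![1, 0; b, 1] * !![1, c; 0, 1] * !![1, 0; d, 1])
    (h00 : A 0 0 = 1 - ((up ^ α : (ZInvP p)ˣ) : ZInvP p))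
    (h11 : A 1 1 = 1 - ((up ^ β : (ZInvP p)ˣ) : ZInvP p)) :
    ∃ ε : ZInvP p, (ε = 1 ∨ ε = -1) ∧
      ∀ i j, A i j - ε * (!![0, 1; -1, 0] : Matrix (Fin 2) (Fin 2) (ZInvP p)) i j ∈
        Ideal.span {(r : ZInvP p)} := by
  subst hA
  have hup_mod_r : Ideal.Quotient.mk (Ideal.span {(r : ZInvP p)}) up = 1 := by
    rw [hup, map_natCast]
    exact Ideal.Quotient.mk_span_natCast_eq_one hpr
  obtain ⟨ε, hε, hmod⟩ := ZInvP.exists_map_elementary_prod_eq_smul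
    (S := ZInvP p ⧸ Ideal.span {(r : ZInvP p)}) hp hup hup_mod_r h00 h11
  refine ⟨ε, hε, fun i j => ?_⟩
  rw [← Ideal.Quotient.mk_eq_mk_iff_sub_mem]
  exact congrFun₂ hmod i j

theorem stmt14 (p r : ℕ) (hp : p.Prime) (hr : 0 < r) (hpr : (r : ℤ) ∣ (p : ℤ) - 1)
    (up : (ZInvP p)ˣ) (hup : (up : ZInvP p) = algebraMap ℤ (ZInvP p) (p : ℤ))
    (a b c d : ZInvP p) (α β : ℤ) (A : Matrix (Fin 2) (Fin 2) (ZInvP p))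
    (hA : A = !![1, a; 0, 1] * !![1, 0; b, 1] * !![1, c; 0, 1] * !![1, 0; d, 1])
    (h00 : A 0 0 = 1 - ((up ^ α : (ZInvP p)ˣ) : ZInvP p))
    (h11 : A 1 1 = 1 - ((up ^ β : (ZInvP p)ˣ) : ZInvP p)) :
    ∃ ε : ZInvP p, (ε = 1 ∨ ε = -1) ∧
      ∀ i j, A i j - ε * (!![0, 1; -1, 0] : Matrix (Fin 2) (Fin 2) (ZInvP p)) i j ∈
        Ideal.span {(r : ZInvP p)} :=
  stmt14_general p r hp hpr up hup a b c d α β A hA h00 h11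
end

section
/- Let p > 7 be a prime such that p − 2 is composite, say p − 2 = r₁·r₂ with integers r₁, r₂ > 1. Then the matrix A = [[1−p, r₁·p],[r₂, 1−p]] lies in SL₂(ℤ[1/p]) but is not a product of four elementary matrices over ℤ[1/p]. -/
/-- A matrix is elementary if it is `E₁₂(λ)` or `E₂₁(λ)`. -/
def IsElemMatrix {R : Type*} [CommRing R] (M : Matrix (Fin 2) (Fin 2) R) : Prop :=
  ∃ lam : R, M = !![1, lam; 0, 1] ∨ M = !![1, 0; lam, 1]

open Matrix

theorem Fin.two_eq_or_swap_of_ne {i j k l : Fin 2} (hij : i ≠ j) (hkl : k ≠ l) :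
    (k = i ∧ l = j) ∨ (k = j ∧ l = i) := by
  omega

section Elementary

variable {R : Type*} [CommRing R]

theorem transvection_zero_one (x : R) : transvection (0 : Fin 2) 1 x = !![1, x; 0, 1] := by
  ext i j; fin_cases i <;> fin_cases j <;> simp [transvection]

theorem transvection_one_zero (x : R) : transvection (1 : Fin 2) 0 x = !![1, 0; x, 1] := by
  ext i j; fin_cases i <;> fin_cases j <;> simp [transvection]

theorem isElemMatrix_iff {M : Matrix (Fin 2) (Fin 2) R} :
    IsElemMatrix M ↔ ∃ (i j : Fin 2) (x : R), i ≠ j ∧ M = transvection i j x := by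
  constructor
  · rintro ⟨x, rfl | rfl⟩
    · exact ⟨0, 1, x, zero_ne_one, (transvection_zero_one x).symm⟩
    · exact ⟨1, 0, x, one_ne_zero, (transvection_one_zero x).symm⟩
  · rintro ⟨i, j, x, hij, rfl⟩
    obtain ⟨rfl, rfl⟩ | ⟨rfl, rfl⟩ := Fin.two_eq_or_swap_of_ne (zero_ne_one (α := Fin 2)) hij
    · exact ⟨x, .inl (transvection_zero_one x)⟩
    · exact ⟨x, .inr (transvection_one_zero x)⟩

def alternatingTransvectionProd (i j : Fin 2) : List R → Matrix (Fin 2) (Fin 2) R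
  | [] => 1
  | x :: xs => transvection i j x * alternatingTransvectionProd j i xs

@[simp]
theorem alternatingTransvectionProd_replicate_zero (i j : Fin 2) (n : ℕ) :
    alternatingTransvectionProd i j (List.replicate n (0 : R)) = 1 := by
  induction n generalizing i j with
  | zero => rfl
  | succ n ih => simp [List.replicate_succ, alternatingTransvectionProd, ih]

theorem exists_alternatingTransvectionProd_eq {L : List (Matrix (Fin 2) (Fin 2) R)}
    (hL : ∀ M ∈ L, IsElemMatrix M) {n : ℕ} (hn : L.length ≤ n) :
    ∃ (i j : Fin 2) (xs : List R),
      i ≠ j ∧ xs.length = n ∧ L.prod = alternatingTransvectionProd i j xs := by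
  induction L generalizing n with
  | nil => exact ⟨0, 1, List.replicate n 0, zero_ne_one, by simp, by simp⟩
  | cons M L ih =>
    obtain ⟨k, l, x, hkl, rfl⟩ := isElemMatrix_iff.mp (hL _ List.mem_cons_self)
    obtain ⟨m, rfl⟩ : ∃ m, n = m + 1 := ⟨n - 1, by simp at hn; omega⟩
    obtain ⟨i, j, xs, hij, hlen, hprod⟩ :=
      ih (fun N hN => hL N (List.mem_cons_of_mem _ hN)) (by simpa using hn)
    rw [List.prod_cons, hprod]
    obtain ⟨rfl, rfl⟩ | ⟨rfl, rfl⟩ := Fin.two_eq_or_swap_of_ne hij hkl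
    · cases xs with
      | nil => exact ⟨k, l, [x], hkl, by simp [← hlen], by simp [alternatingTransvectionProd]⟩
      | cons y ys =>
        -- the leading `0` keeps the length while `x` is absorbed into `y`
        refine ⟨l, k, 0 :: (x + y) :: ys, hkl.symm, by simpa using hlen, ?_⟩
        simp [alternatingTransvectionProd, ← mul_assoc, transvection_mul_transvection_same _ _ hkl]
    · exact ⟨k, l, x :: xs, hkl, by simp [hlen], rfl⟩

theorem alternatingTransvectionProd_four_apply {i j : Fin 2} (hij : i ≠ j) (a b c d : R) :
    alternatingTransvectionProd i j [a, b, c, d] j j = 1 + b * c ∧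
      alternatingTransvectionProd i j [a, b, c, d] j i = b + (1 + b * c) * d := by
  obtain ⟨rfl, rfl⟩ | ⟨rfl, rfl⟩ := Fin.two_eq_or_swap_of_ne (zero_ne_one (α := Fin 2)) hij <;>
    refine ⟨?_, ?_⟩ <;>
    simp [alternatingTransvectionProd, transvection_zero_one, transvection_one_zero, mul_apply,
      Fin.sum_univ_two] <;>
    ring

end Elementary

theorem ZMod.natCast_eq_one_mod_pred {n : ℕ} (hn : 1 ≤ n) : (n : ZMod (n - 1)) = 1 := by
  obtain ⟨m, rfl⟩ : ∃ m, n = m + 1 := ⟨n - 1, by omega⟩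
  simp

theorem ZMod.intCast_ne_one_and_ne_neg_one {n : ℕ} {s : ℤ} (h1 : 1 < s) (h2 : s + 1 < n) :
    (s : ZMod n) ≠ 1 ∧ (s : ZMod n) ≠ -1 := by
  constructor <;> intro h
  · have hdvd := (ZMod.intCast_zmod_eq_zero_iff_dvd (s - 1) n).mp (by push_cast [h]; ring)
    have := Int.le_of_dvd (by omega) hdvd
    omega
  · have hdvd := (ZMod.intCast_zmod_eq_zero_iff_dvd (s + 1) n).mp (by push_cast [h]; ring)
    have := Int.le_of_dvd (by omega) hdvd
    omega

theorem ZInvP.isUnit_natCast (p : ℕ) : IsUnit (p : ZInvP p) := by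
  simpa using IsLocalization.Away.algebraMap_isUnit (S := ZInvP p) (p : ℤ)

theorem ZInvP.map_eq_one_or_neg_one_of_isUnit {R : Type*} [CommRing R] {p : ℕ} (hp : p.Prime)
    (hp1 : (p : R) = 1) (f : ZInvP p →+* R) {u : ZInvP p} (hu : IsUnit u) :
    f u = 1 ∨ f u = -1 := by
  obtain ⟨n, a, ha⟩ := IsLocalization.Away.surj (p : ℤ) u
  have hunit : IsUnit (algebraMap ℤ (ZInvP p) a) :=
    ha ▸ hu.mul (IsLocalization.Away.algebraMap_pow_isUnit _ n)
  obtain ⟨m, hdvd⟩ := (IsLocalization.Away.algebraMap_isUnit_iff (p : ℤ)).mp hunit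
  obtain ⟨k, -, hassoc⟩ := (dvd_prime_pow (Nat.prime_iff_prime_int.mp hp) m).mp hdvd
  have hfu : f u = a := by simpa [hp1] using congrArg f ha
  rcases Int.associated_iff.mp hassoc with rfl | rfl <;> simp [hfu, hp1]

theorem stmt15_general (p : ℕ) (hp : p.Prime) (r₁ r₂ : ℤ)
    (h1 : 1 < r₁) (h2 : 1 < r₂) (hcomp : (p : ℤ) - 2 = r₁ * r₂) :
    (!![1 - (p : ZInvP p), (r₁ : ZInvP p) * (p : ZInvP p);
        (r₂ : ZInvP p), 1 - (p : ZInvP p)] : Matrix (Fin 2) (Fin 2) (ZInvP p)).det = 1 ∧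
    ¬ ∃ L : List (Matrix (Fin 2) (Fin 2) (ZInvP p)), L.length ≤ 4 ∧
        (∀ M ∈ L, IsElemMatrix M) ∧
        L.prod = !![1 - (p : ZInvP p), (r₁ : ZInvP p) * (p : ZInvP p);
          (r₂ : ZInvP p), 1 - (p : ZInvP p)] := by
  set A : Matrix (Fin 2) (Fin 2) (ZInvP p) :=
    !![1 - (p : ZInvP p), (r₁ : ZInvP p) * (p : ZInvP p); (r₂ : ZInvP p), 1 - (p : ZInvP p)] with hA
  have hr₁r₂ : (r₁ : ZInvP p) * r₂ = p - 2 := by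
    rw [← Int.cast_mul, ← hcomp]; push_cast; ring
  refine ⟨by rw [det_fin_two_of]; linear_combination (-(p : ZInvP p)) * hr₁r₂, ?_⟩
  rintro ⟨L, hL, hE, hprod⟩
  obtain ⟨i, j, xs, hij, hlen, hxs⟩ := exists_alternatingTransvectionProd_eq hE hL
  obtain ⟨a, b, c, d, rfl⟩ := List.length_eq_four.mp hlen
  obtain ⟨hjj, hji⟩ := alternatingTransvectionProd_four_apply hij a b c d
  rw [← hxs, hprod] at hjj hji
  have hp1 : (p : ZMod (p - 1)) = 1 := ZMod.natCast_eq_one_mod_pred hp.one_lt.le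
  let φ : ZInvP p →+* ZMod (p - 1) :=
    IsLocalization.Away.lift (p : ℤ) (g := Int.castRingHom _) (by simp [hp1])
  obtain ⟨hAjj, hAji⟩ : A j j = 1 - p ∧ (φ (A j i) = r₂ ∨ φ (A j i) = r₁) := by
    obtain ⟨rfl, rfl⟩ | ⟨rfl, rfl⟩ := Fin.two_eq_or_swap_of_ne zero_ne_one hij <;> simp [hA, hp1]
  have hbc : b * -c = p := by linear_combination -(hjj.symm.trans hAjj)
  have hb : IsUnit b := isUnit_of_mul_isUnit_left (hbc ▸ ZInvP.isUnit_natCast p)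
  obtain ⟨r, hr, hrp, hφb⟩ : ∃ r : ℤ, 1 < r ∧ r + 2 < p ∧ φ b = r := by
    have hφb : φ b = φ (A j i) := by rw [hji, ← hjj, hAjj]; simp [hp1]
    rcases hAji with h | h
    · exact ⟨r₂, h2, by nlinarith, hφb.trans h⟩
    · exact ⟨r₁, h1, by nlinarith, hφb.trans h⟩
  have hne := ZMod.intCast_ne_one_and_ne_neg_one (n := p - 1) hr (by omega)
  exact (hφb ▸ ZInvP.map_eq_one_or_neg_one_of_isUnit hp hp1 φ hb).elim hne.1 hne.2

theorem stmt15 (p : ℕ) (hp : p.Prime) (hp7 : 7 < p) (r₁ r₂ : ℤ)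
    (h1 : 1 < r₁) (h2 : 1 < r₂) (hcomp : (p : ℤ) - 2 = r₁ * r₂) :
    (!![1 - (p : ZInvP p), (r₁ : ZInvP p) * (p : ZInvP p);
        (r₂ : ZInvP p), 1 - (p : ZInvP p)] : Matrix (Fin 2) (Fin 2) (ZInvP p)).det = 1 ∧
    ¬ ∃ L : List (Matrix (Fin 2) (Fin 2) (ZInvP p)), L.length ≤ 4 ∧
        (∀ M ∈ L, IsElemMatrix M) ∧
        L.prod = !![1 - (p : ZInvP p), (r₁ : ZInvP p) * (p : ZInvP p);
          (r₂ : ZInvP p), 1 - (p : ZInvP p)] :=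
  stmt15_general p hp r₁ r₂ h1 h2 hcomp
end
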